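/- arXiv:math/0608144 — 2 statements merged into one kernel-verified Lean document; each statement's English description precedes it below -/
import Mathlib

section
/- (Toen's formula.) For all objects X, Y, L of C the following equality of rational numbers holds: |Hom(L,Y)_{X[1]}| · {L,Y} / ( |Aut(Y)| · {Y,Y} ) = |Hom(X,L)_Y| · {X,L} / ( |Aut(X)| · {X,X} ). -/
open CategoryTheory CategoryTheory.Limits CategoryTheory.Pretriangulated

universe v u

/-- `{X,Y} := ∏_{i>0} |Hom(X[i],Y)|^{(-1)^i}`, as a rational number. -/
noncomputable def homAlternatingProd {C : Type u} [CategoryTheory.Category.{v} C]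
    [HasShift C ℤ] (X Y : C) : ℚ :=
  ∏' i : ℕ, ((Nat.card (X⟦(i : ℤ) + 1⟧ ⟶ Y) : ℚ) ^ ((-1 : ℤ) ^ (i + 1)))

/-- `Cone(u) ≅ W`: there are morphisms completing `u` to a distinguished triangle with
third vertex `W`. -/
def ConeIs {C : Type u} [CategoryTheory.Category.{v} C] [Preadditive C] [HasZeroObject C]
    [HasShift C ℤ] [∀ i : ℤ, (CategoryTheory.shiftFunctor C i).Additive] [Pretriangulated C]
    {A B : C} (u : A ⟶ B) (W : C) : Prop :=
  ∃ (v : B ⟶ W) (w : W ⟶ A⟦(1 : ℤ)⟧), Triangle.mk u v w ∈ distTriang C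

/-!
Count the distinguished triangles `X ⟶ L ⟶ Y ⟶ X⟦1⟧` in two ways. For fixed `u : X ⟶ L`,
`Aut Y` acts transitively on the completions `(v, w)` of `u`, and the stabilizer of `(v, w)` is
`{1 + δ | v ≫ δ = 0, δ ≫ w = 0}`; so weighting each triangle by the size of this group of `δ`s
gives `|Hom(X,L)_Y| * |Aut Y|`. Rotating, the weight `|{α | w ≫ α = 0, α ≫ u⟦1⟧' = 0}|` gives
`|Hom(L,Y)_{X[1]}| * |Aut X|`. For one triangle the two weights are compared through
`K = {ε : X⟦1⟧ ⟶ Y | w ≫ ε ≫ w = 0}`, which maps onto both groups, with kernels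
`{ε | w ≫ ε = 0}` and `{ε | ε ≫ w = 0}`. By exactness of the long Hom sequences their sizes are
alternating products of Hom sizes, namely `{Y,Y} / ({L,Y} {X[1],Y})` and
`{X,X} / ({X[1],Y} {X,L})`.
-/

open CategoryTheory.Preadditive Filter

section AddGroupCard

variable {G H : Type*} [AddCommGroup G] [AddCommGroup H]

lemma AddMonoidHom.card_eq_card_ker_mul_card_range (f : G →+ H) :
    Nat.card G = Nat.card f.ker * Nat.card f.range := by
  rw [← AddSubgroup.index_ker, AddSubgroup.card_mul_index]

lemma AddMonoidHom.card_eq_card_ker_mul_card_map (f : G →+ H) {K : AddSubgroup G}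
    (hK : f.ker ≤ K) : Nat.card K = Nat.card f.ker * Nat.card (K.map f) := by
  rw [← AddSubgroup.relIndex_ker, ← Nat.card_congr (AddSubgroup.addSubgroupOfEquivOfLe hK).toEquiv,
    AddSubgroup.relIndex, AddSubgroup.card_mul_index]

end AddGroupCard

section FieldProducts

variable {K : Type*} [Field K]

lemma eq_prod_zpow_of_mul_succ {r a : ℕ → K} (hr : ∀ j, r j ≠ 0)
    (h : ∀ j, r j * r (j + 1) = a j) (n : ℕ) (hn : r n = 1) :
    r 0 = ∏ j ∈ Finset.range n, a j ^ ((-1 : ℤ) ^ j) := by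
  induction n generalizing r a with
  | zero => simpa using hn
  | succ n ih =>
    have h₁ : r 1 = ∏ j ∈ Finset.range n, a (j + 1) ^ ((-1 : ℤ) ^ j) :=
      ih (r := fun j => r (j + 1)) (fun j => hr _) (fun j => h _) hn
    simp only [Finset.prod_range_succ', pow_succ, mul_neg_one, zpow_neg, Finset.prod_inv_distrib,
      ← h₁, pow_zero, zpow_one, ← h 0]
    field_simp [hr 1]

lemma Finset.prod_mul_div_zpow {ι : Type*} (s : Finset ι) (x y z : ι → K) (e : ι → ℤ) :
    ∏ i ∈ s, (x i * y i / z i) ^ e i =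
      (∏ i ∈ s, z i ^ e i)⁻¹ / ((∏ i ∈ s, x i ^ e i)⁻¹ * (∏ i ∈ s, y i ^ e i)⁻¹) := by
  simp only [div_zpow, mul_zpow, Finset.prod_div_distrib, Finset.prod_mul_distrib]
  rw [div_eq_mul_inv, div_eq_mul_inv, mul_inv, inv_inv, inv_inv, mul_comm]

end FieldProducts

def LeftLocallyHomologicallyFinite (C : Type u) [Category.{v} C] [Preadditive C] [HasShift C ℤ] :
    Prop :=
  ∀ X Y : C, ∃ N : ℕ, ∀ i ≥ N, ∀ f : X⟦(i : ℤ)⟧ ⟶ Y, f = 0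

section Shift

variable {C : Type u} [Category.{v} C] [HasShift C ℤ]

lemma card_hom_shift_shift (A M : C) {a b c : ℤ} (h : a + b = c) :
    Nat.card (A⟦a⟧⟦b⟧ ⟶ M) = Nat.card (A⟦c⟧ ⟶ M) :=
  Nat.card_congr (((shiftFunctorAdd' C a b c h).app A).symm.homCongr (Iso.refl M))

lemma card_hom_shift_neg (M A : C) (n : ℤ) : Nat.card (M ⟶ A⟦-n⟧) = Nat.card (M⟦n⟧ ⟶ A) :=
  Nat.card_congr ((shiftEquiv C n).toAdjunction.homEquiv M A).symm

lemma homAlternatingProd_shift (A M : C) (n : ℤ) :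
    homAlternatingProd (A⟦n⟧) (M⟦n⟧) = homAlternatingProd A M := by
  refine tprod_congr fun i => ?_
  congr 2
  exact Nat.card_congr ((((shiftFunctorComm C n _).app A).homCongr (Iso.refl _)).trans
    (Functor.FullyFaithful.ofFullyFaithful (shiftFunctor C n)).homEquiv.symm)

lemma card_aut_shift (X : C) (n : ℤ) : Nat.card (Aut (X⟦n⟧)) = Nat.card (Aut X) :=
  Nat.card_congr (Functor.FullyFaithful.ofFullyFaithful (shiftFunctor C n)).isoEquiv.symm

end Shift

section Preadditive

variable {C : Type u} [Category.{v} C] [Preadditive C]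

lemma card_ker_leftComp_congr {P Q P' Q' : C} {f : P ⟶ Q} {f' : P' ⟶ Q'} (e₁ : P ≅ P')
    (e₂ : Q ≅ Q') (comm : f ≫ e₂.hom = e₁.hom ≫ f') (M : C) :
    Nat.card (leftComp M f).ker = Nat.card (leftComp M f').ker :=
  Nat.card_congr <| (e₂.homCongr (Iso.refl M)).subtypeEquiv fun φ => by
    have : f' = e₁.inv ≫ f ≫ e₂.hom := by rw [comm, Iso.inv_hom_id_assoc]
    simp [leftComp, this]

lemma card_ker_rightComp_congr {P Q P' Q' : C} {f : P ⟶ Q} {f' : P' ⟶ Q'} (e₁ : P ≅ P')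
    (e₂ : Q ≅ Q') (comm : f ≫ e₂.hom = e₁.hom ≫ f') (M : C) :
    Nat.card (rightComp M f).ker = Nat.card (rightComp M f').ker :=
  Nat.card_congr <| ((Iso.refl M).homCongr e₁).subtypeEquiv fun φ => by
    simp only [rightComp, AddMonoidHom.mem_ker, AddMonoidHom.mk'_apply, Iso.homCongr_apply,
      Iso.refl_inv, Category.id_comp]
    rw [Category.assoc, ← comm, ← Category.assoc, Preadditive.IsIso.comp_right_eq_zero _ e₂.hom]

def vanishingEnd {B Z W : C} (b : B ⟶ Z) (c : Z ⟶ W) : AddSubgroup (Z ⟶ Z) :=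
  (leftComp Z b).ker ⊓ (rightComp Z c).ker

lemma mem_vanishingEnd {B Z W : C} {b : B ⟶ Z} {c : Z ⟶ W} {δ : Z ⟶ Z} :
    δ ∈ vanishingEnd b c ↔ b ≫ δ = 0 ∧ δ ≫ c = 0 :=
  Iff.rfl

@[simps]
def unipotentAut {Z : C} (δ : Z ⟶ Z) (hδ : δ ≫ δ = 0) : Aut Z where
  hom := 𝟙 Z + δ
  inv := 𝟙 Z - δ
  hom_inv_id := by simp [hδ]
  inv_hom_id := by simp [hδ]

variable [HasShift C ℤ]

lemma homAlternatingProd_eq_inv_prod {A M : C} {N : ℕ}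
    (h : ∀ i ≥ N, Subsingleton (A⟦(i : ℤ) + 1⟧ ⟶ M)) :
    homAlternatingProd A M =
      (∏ i ∈ Finset.range N, (Nat.card (A⟦(i : ℤ) + 1⟧ ⟶ M) : ℚ) ^ ((-1 : ℤ) ^ i))⁻¹ := by
  rw [homAlternatingProd, tprod_eq_prod (s := Finset.range N) fun i hi => ?_,
    ← Finset.prod_inv_distrib]
  · simp only [pow_succ, mul_neg_one, zpow_neg]
  · have := h i (by simpa using hi)
    rw [Nat.card_of_subsingleton (0 : A⟦(i : ℤ) + 1⟧ ⟶ M), Nat.cast_one, one_zpow]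

namespace LeftLocallyHomologicallyFinite

lemma eventually_subsingleton (hC : LeftLocallyHomologicallyFinite C) (X Y : C) :
    ∀ᶠ i : ℕ in atTop, Subsingleton (X⟦(i : ℤ)⟧ ⟶ Y) := by
  obtain ⟨N, hN⟩ := hC X Y
  exact eventually_atTop.2 ⟨N, fun i hi => ⟨fun f g => (hN i hi f).trans (hN i hi g).symm⟩⟩

lemma eventually_subsingleton_succ (hC : LeftLocallyHomologicallyFinite C) (X Y : C) :
    ∀ᶠ i : ℕ in atTop, Subsingleton (X⟦(i : ℤ) + 1⟧ ⟶ Y) := by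
  simpa only [Nat.cast_succ] using
    (tendsto_add_atTop_nat 1).eventually (hC.eventually_subsingleton X Y)

lemma homAlternatingProd_pos [∀ A B : C, Finite (A ⟶ B)] (hC : LeftLocallyHomologicallyFinite C)
    (A M : C) : 0 < homAlternatingProd A M := by
  obtain ⟨N, hN⟩ := eventually_atTop.1 (hC.eventually_subsingleton_succ A M)
  rw [homAlternatingProd_eq_inv_prod hN]
  exact inv_pos.2 (Finset.prod_pos fun i _ => zpow_pos (Nat.cast_pos.2 Nat.card_pos) _)

end LeftLocallyHomologicallyFinite

namespace CategoryTheory.Pretriangulated.Triangle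

noncomputable def cardKerPrecomp (T : Triangle C) (M : C) : ℕ :=
  Nat.card (leftComp M T.mor₂).ker

noncomputable def cardKerPostcomp (T : Triangle C) (M : C) : ℕ :=
  Nat.card (rightComp M T.mor₁).ker

lemma cardKerPrecomp_congr {T T' : Triangle C} (e : T ≅ T') (M : C) :
    T.cardKerPrecomp M = T'.cardKerPrecomp M :=
  card_ker_leftComp_congr (π₂.mapIso e) (π₃.mapIso e) e.hom.comm₂ M

lemma cardKerPostcomp_congr {T T' : Triangle C} (e : T ≅ T') (M : C) :
    T.cardKerPostcomp M = T'.cardKerPostcomp M :=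
  card_ker_rightComp_congr (π₁.mapIso e) (π₂.mapIso e) e.hom.comm₁ M

variable {T : Triangle C} {M : C}

lemma cardKerPrecomp_eq_one (h : Subsingleton (T.obj₃ ⟶ M)) : T.cardKerPrecomp M = 1 :=
  Nat.card_eq_one_iff_unique.2 ⟨⟨fun _ _ => Subtype.ext (h.elim _ _)⟩, ⟨0⟩⟩

lemma cardKerPostcomp_eq_one (h : Subsingleton (M ⟶ T.obj₁)) : T.cardKerPostcomp M = 1 :=
  Nat.card_eq_one_iff_unique.2 ⟨⟨fun _ _ => Subtype.ext (h.elim _ _)⟩, ⟨0⟩⟩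

variable (T : Triangle C)

def sandwichKer : AddSubgroup (T.obj₁⟦(1 : ℤ)⟧ ⟶ T.obj₃) :=
  ((rightComp T.obj₃ T.mor₃).comp (leftComp T.obj₃ T.mor₃)).ker

lemma mem_sandwichKer {ε : T.obj₁⟦(1 : ℤ)⟧ ⟶ T.obj₃} :
    ε ∈ T.sandwichKer ↔ (T.mor₃ ≫ ε) ≫ T.mor₃ = 0 :=
  Iff.rfl

end CategoryTheory.Pretriangulated.Triangle

end Preadditive

section Pretriangulated

variable {C : Type u} [Category.{v} C] [Preadditive C] [HasZeroObject C] [HasShift C ℤ]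
  [∀ i : ℤ, (CategoryTheory.shiftFunctor C i).Additive] [Pretriangulated C]

namespace CategoryTheory.Pretriangulated.Triangle

variable {T : Triangle C}

lemma range_leftComp_mor₃ (hT : T ∈ distTriang C) (M : C) :
    (leftComp M T.mor₃).range = (leftComp M T.mor₂).ker := by
  ext φ
  refine ⟨?_, fun hφ => ?_⟩
  · rintro ⟨ψ, rfl⟩
    simp [leftComp, comp_distTriang_mor_zero₂₃_assoc _ hT]
  · obtain ⟨ψ, rfl⟩ := yoneda_exact₃ T hT φ hφ
    exact ⟨ψ, rfl⟩

lemma range_rightComp_mor₁ (hT : T ∈ distTriang C) (M : C) :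
    (rightComp M T.mor₁).range = (rightComp M T.mor₂).ker := by
  ext φ
  refine ⟨?_, fun hφ => ?_⟩
  · rintro ⟨ψ, rfl⟩
    simp [rightComp, comp_distTriang_mor_zero₁₂ _ hT]
  · obtain ⟨ψ, rfl⟩ := coyoneda_exact₂ T hT φ hφ
    exact ⟨ψ, rfl⟩

lemma cardKerPrecomp_mul_rotate (hT : T ∈ distTriang C) (M : C) :
    T.cardKerPrecomp M * T.rotate.cardKerPrecomp M = Nat.card (T.obj₁⟦(1 : ℤ)⟧ ⟶ M) := by
  rw [(leftComp M T.mor₃).card_eq_card_ker_mul_card_range, range_leftComp_mor₃ hT, mul_comm]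
  rfl

lemma cardKerPostcomp_mul_rotate (hT : T ∈ distTriang C) (M : C) :
    T.cardKerPostcomp M * T.rotate.cardKerPostcomp M = Nat.card (M ⟶ T.obj₁) := by
  rw [(rightComp M T.mor₁).card_eq_card_ker_mul_card_range, range_rightComp_mor₁ hT]
  rfl

lemma map_leftComp_sandwichKer (hT : T ∈ distTriang C) :
    T.sandwichKer.map (leftComp T.obj₃ T.mor₃) = vanishingEnd T.mor₂ T.mor₃ := by
  ext δ
  refine ⟨?_, fun hδ => ?_⟩
  · rintro ⟨ε, hε, rfl⟩
    exact ⟨by simp [leftComp, comp_distTriang_mor_zero₂₃_assoc _ hT], hε⟩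
  · obtain ⟨ε, rfl⟩ := yoneda_exact₃ T hT δ hδ.1
    exact ⟨ε, hδ.2, rfl⟩

lemma map_rightComp_sandwichKer (hT : T ∈ distTriang C) :
    T.sandwichKer.map (rightComp (T.obj₁⟦(1 : ℤ)⟧) T.mor₃) =
      vanishingEnd T.mor₃ T.rotate.mor₃ := by
  have hw : T.mor₃ ≫ T.rotate.mor₃ = 0 := comp_distTriang_mor_zero₂₃ _ (rot_of_distTriang _ hT)
  ext α
  refine ⟨?_, fun hα => ?_⟩
  · rintro ⟨ε, hε, rfl⟩
    refine mem_vanishingEnd.2 ⟨?_, ?_⟩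
    · simpa [rightComp, mem_sandwichKer] using hε
    · exact (Category.assoc ε T.mor₃ T.rotate.mor₃).trans (by rw [hw, comp_zero])
  · obtain ⟨ε, rfl⟩ := coyoneda_exact₂ _ (rot_of_distTriang _ (rot_of_distTriang _ hT))
      α (mem_vanishingEnd.1 hα).2
    exact ⟨ε, T.mem_sandwichKer.2 ((Category.assoc _ _ _).trans (mem_vanishingEnd.1 hα).1), rfl⟩

end CategoryTheory.Pretriangulated.Triangle

lemma card_vanishingEnd_mul_cardKerPrecomp {T : Triangle C} (hT : T ∈ distTriang C) :
    Nat.card (vanishingEnd T.mor₂ T.mor₃) * T.rotate.cardKerPrecomp T.obj₃ =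
      Nat.card (vanishingEnd T.mor₃ T.rotate.mor₃) *
        T.rotate.rotate.cardKerPostcomp (T.obj₁⟦(1 : ℤ)⟧) := by
  have hleft : (leftComp T.obj₃ T.mor₃).ker ≤ T.sandwichKer := fun ε (hε : T.mor₃ ≫ ε = 0) => by
    rw [Triangle.mem_sandwichKer, hε, zero_comp]
  have hright : (rightComp (T.obj₁⟦(1 : ℤ)⟧) T.mor₃).ker ≤ T.sandwichKer :=
    fun ε (hε : ε ≫ T.mor₃ = 0) => by rw [Triangle.mem_sandwichKer, Category.assoc, hε, comp_zero]
  have := (leftComp T.obj₃ T.mor₃).card_eq_card_ker_mul_card_map hleft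
  rw [(rightComp _ T.mor₃).card_eq_card_ker_mul_card_map hright,
    Triangle.map_leftComp_sandwichKer hT, Triangle.map_rightComp_sandwichKer hT] at this
  change _ * Nat.card (leftComp T.obj₃ T.mor₃).ker =
    _ * Nat.card (rightComp (T.obj₁⟦(1 : ℤ)⟧) T.mor₃).ker
  rw [mul_comm, ← this, mul_comm]


/-- Abstracts `cardKerPrecomp` and `cardKerPostcomp`: by exactness of a Hom sequence, the kernels
at two consecutive rotations multiply to the size `g` of the group between them. As three
rotations are a shift, `F T` telescopes into an alternating product over the shifts of `T`. -/
structure RotationMultiplicative (F : Triangle C → ℚ) (g : C → ℚ) : Prop where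
  congr {T T' : Triangle C} : (T ≅ T') → F T = F T'
  ne_zero (T : Triangle C) : F T ≠ 0
  mul_rotate : ∀ T ∈ distTriang C, F T * F T.rotate = g T.obj₁

namespace RotationMultiplicative

variable {F : Triangle C → ℚ} {g : C → ℚ} {T : Triangle C}

lemma mul_shift_one (hF : RotationMultiplicative F g) (hT : T ∈ distTriang C) :
    F T * F (T⟦(1 : ℤ)⟧) = g T.obj₁ * g T.obj₃ / g T.obj₂ := by
  have h₁ := hF.mul_rotate _ hT
  have h₂ : F T.rotate * F T.rotate.rotate = g T.obj₂ :=
    hF.mul_rotate _ (rot_of_distTriang _ hT)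
  have h₃ : F T.rotate.rotate * F (T⟦(1 : ℤ)⟧) = g T.obj₃ := by
    have : F T.rotate.rotate.rotate = F (T⟦(1 : ℤ)⟧) := hF.congr ((rotateRotateRotateIso C).app T)
    rw [← this]
    exact hF.mul_rotate _ (rot_of_distTriang _ (rot_of_distTriang _ hT))
  rw [eq_div_iff (h₂ ▸ mul_ne_zero (hF.ne_zero _) (hF.ne_zero _))]
  linear_combination (-(F T * F (T⟦(1 : ℤ)⟧))) * h₂ + g T.obj₁ * h₃ +
    (F T.rotate.rotate * F (T⟦(1 : ℤ)⟧)) * h₁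

lemma mul_shift (hF : RotationMultiplicative F g) (hT : T ∈ distTriang C) {n m : ℤ}
    (h : n + 1 = m) :
    F (T⟦n⟧) * F (T⟦m⟧) = g (T.obj₁⟦n⟧) * g (T.obj₃⟦n⟧) / g (T.obj₂⟦n⟧) := by
  have : F (T⟦n⟧⟦(1 : ℤ)⟧) = F (T⟦m⟧) :=
    hF.congr ((shiftFunctorAdd' (Triangle C) n 1 m h).app T).symm
  rw [← this]
  exact hF.mul_shift_one (Triangle.shift_distinguished T hT n)

lemma eq_prod_of_shift_nat (hF : RotationMultiplicative F g) (hT : T ∈ distTriang C) {N : ℕ}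
    (hN : F (T⟦(N : ℤ)⟧) = 1) :
    F T = ∏ i ∈ Finset.range N,
      (g (T.obj₁⟦(i : ℤ)⟧) * g (T.obj₃⟦(i : ℤ)⟧) / g (T.obj₂⟦(i : ℤ)⟧)) ^ ((-1 : ℤ) ^ i) := by
  have : F T = F (T⟦((0 : ℕ) : ℤ)⟧) := hF.congr ((shiftFunctorZero (Triangle C) ℤ).app T).symm
  rw [this]
  exact eq_prod_zpow_of_mul_succ (r := fun i : ℕ => F (T⟦(i : ℤ)⟧)) (fun i => hF.ne_zero _)
    (fun i => hF.mul_shift hT (by push_cast; ring)) N hN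

lemma eq_prod_of_shift_neg (hF : RotationMultiplicative F g) (hT : T ∈ distTriang C) {N : ℕ}
    (hN : F (T⟦-(N : ℤ)⟧) = 1) :
    F T = ∏ i ∈ Finset.range N, (g (T.obj₁⟦-((i : ℤ) + 1)⟧) * g (T.obj₃⟦-((i : ℤ) + 1)⟧) /
      g (T.obj₂⟦-((i : ℤ) + 1)⟧)) ^ ((-1 : ℤ) ^ i) := by
  have : F T = F (T⟦-((0 : ℕ) : ℤ)⟧) := hF.congr ((shiftFunctorZero (Triangle C) ℤ).app T).symm
  rw [this]
  refine eq_prod_zpow_of_mul_succ (r := fun i : ℕ => F (T⟦-(i : ℤ)⟧)) (fun i => hF.ne_zero _)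
    (fun i => ?_) N hN
  simp only [Nat.cast_succ]
  rw [mul_comm]
  exact hF.mul_shift hT (by ring)

end RotationMultiplicative

section FiniteHom

variable [∀ A B : C, Finite (A ⟶ B)]

lemma rotationMultiplicative_cardKerPrecomp (M : C) :
    RotationMultiplicative (fun T => (T.cardKerPrecomp M : ℚ))
      (fun A => Nat.card (A⟦(1 : ℤ)⟧ ⟶ M)) where
  congr e := by rw [Triangle.cardKerPrecomp_congr e]
  ne_zero _ := Nat.cast_ne_zero.2 Nat.card_pos.ne'
  mul_rotate _ hT := by exact_mod_cast Triangle.cardKerPrecomp_mul_rotate hT M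

lemma rotationMultiplicative_cardKerPostcomp (M : C) :
    RotationMultiplicative (fun T => (T.cardKerPostcomp M : ℚ)) (fun A => Nat.card (M ⟶ A)) where
  congr e := by rw [Triangle.cardKerPostcomp_congr e]
  ne_zero _ := Nat.cast_ne_zero.2 Nat.card_pos.ne'
  mul_rotate _ hT := by exact_mod_cast Triangle.cardKerPostcomp_mul_rotate hT M

lemma CategoryTheory.Pretriangulated.Triangle.cardKerPrecomp_eq
    (hC : LeftLocallyHomologicallyFinite C) {T : Triangle C} (hT : T ∈ distTriang C) (M : C) :
    (T.cardKerPrecomp M : ℚ) =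
      homAlternatingProd T.obj₂ M /
        (homAlternatingProd T.obj₁ M * homAlternatingProd T.obj₃ M) := by
  obtain ⟨N, hN⟩ := eventually_atTop.1 ((hC.eventually_subsingleton T.obj₃ M).and
    (((hC.eventually_subsingleton_succ T.obj₁ M).and (hC.eventually_subsingleton_succ T.obj₂ M)).and
      (hC.eventually_subsingleton_succ T.obj₃ M)))
  rw [(rotationMultiplicative_cardKerPrecomp M).eq_prod_of_shift_nat hT (N := N)
      (by rw [Triangle.cardKerPrecomp_eq_one (hN N le_rfl).1, Nat.cast_one]),
    homAlternatingProd_eq_inv_prod fun i hi => (hN i hi).2.1.1,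
    homAlternatingProd_eq_inv_prod fun i hi => (hN i hi).2.1.2,
    homAlternatingProd_eq_inv_prod fun i hi => (hN i hi).2.2, Finset.prod_mul_div_zpow]
  simp only [card_hom_shift_shift _ _ rfl]

lemma CategoryTheory.Pretriangulated.Triangle.cardKerPostcomp_eq
    (hC : LeftLocallyHomologicallyFinite C) {T : Triangle C} (hT : T ∈ distTriang C) (M : C) :
    (T.cardKerPostcomp M : ℚ) =
      homAlternatingProd M T.obj₂ /
        (homAlternatingProd M T.obj₁ * homAlternatingProd M T.obj₃) := by
  obtain ⟨N, hN⟩ := eventually_atTop.1 ((hC.eventually_subsingleton M T.obj₁).and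
    (((hC.eventually_subsingleton_succ M T.obj₁).and (hC.eventually_subsingleton_succ M T.obj₂)).and
      (hC.eventually_subsingleton_succ M T.obj₃)))
  have hN₀ : Subsingleton (M ⟶ T.obj₁⟦-(N : ℤ)⟧) :=
    ((shiftEquiv C (N : ℤ)).toAdjunction.homEquiv M _).subsingleton_congr.1 (hN N le_rfl).1
  rw [(rotationMultiplicative_cardKerPostcomp M).eq_prod_of_shift_neg hT (N := N)
      (by rw [Triangle.cardKerPostcomp_eq_one hN₀, Nat.cast_one]),
    homAlternatingProd_eq_inv_prod fun i hi => (hN i hi).2.1.1,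
    homAlternatingProd_eq_inv_prod fun i hi => (hN i hi).2.1.2,
    homAlternatingProd_eq_inv_prod fun i hi => (hN i hi).2.2, Finset.prod_mul_div_zpow]
  simp only [card_hom_shift_neg]

lemma card_vanishingEnd_mul_homAlternatingProd (hC : LeftLocallyHomologicallyFinite C)
    {T : Triangle C} (hT : T ∈ distTriang C) :
    (Nat.card (vanishingEnd T.mor₂ T.mor₃) : ℚ) *
        (homAlternatingProd T.obj₃ T.obj₃ * homAlternatingProd T.obj₁ T.obj₂) =
      Nat.card (vanishingEnd T.mor₃ T.rotate.mor₃) *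
        (homAlternatingProd T.obj₁ T.obj₁ * homAlternatingProd T.obj₂ T.obj₃) := by
  have hT' := rot_of_distTriang _ hT
  have h : (Nat.card (vanishingEnd T.mor₂ T.mor₃) : ℚ) * T.rotate.cardKerPrecomp T.obj₃ =
      Nat.card (vanishingEnd T.mor₃ T.rotate.mor₃) *
        T.rotate.rotate.cardKerPostcomp (T.obj₁⟦(1 : ℤ)⟧) := by
    exact_mod_cast card_vanishingEnd_mul_cardKerPrecomp hT
  have hpre : (T.rotate.cardKerPrecomp T.obj₃ : ℚ) = homAlternatingProd T.obj₃ T.obj₃ /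
      (homAlternatingProd T.obj₂ T.obj₃ * homAlternatingProd (T.obj₁⟦(1 : ℤ)⟧) T.obj₃) :=
    T.rotate.cardKerPrecomp_eq hC hT' T.obj₃
  have hpost : (T.rotate.rotate.cardKerPostcomp (T.obj₁⟦(1 : ℤ)⟧) : ℚ) =
      homAlternatingProd T.obj₁ T.obj₁ /
        (homAlternatingProd (T.obj₁⟦(1 : ℤ)⟧) T.obj₃ * homAlternatingProd T.obj₁ T.obj₂) := by
    rw [← homAlternatingProd_shift T.obj₁ T.obj₁ 1, ← homAlternatingProd_shift T.obj₁ T.obj₂ 1]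
    exact T.rotate.rotate.cardKerPostcomp_eq hC (rot_of_distTriang _ hT') _
  rw [hpre, hpost] at h
  have := hC.homAlternatingProd_pos T.obj₂ T.obj₃
  have := hC.homAlternatingProd_pos (T.obj₁⟦(1 : ℤ)⟧) T.obj₃
  have := hC.homAlternatingProd_pos T.obj₁ T.obj₂
  field_simp at h
  linear_combination h

end FiniteHom

abbrev TriangleCompletion {A B : C} (u : A ⟶ B) (Z : C) : Type v :=
  {vw : (B ⟶ Z) × (Z ⟶ A⟦(1 : ℤ)⟧) // Triangle.mk u vw.1 vw.2 ∈ distTriang C}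

lemma sq_eq_zero_of_mem_vanishingEnd {A B Z : C} {u : A ⟶ B} {v : B ⟶ Z} {w : Z ⟶ A⟦(1 : ℤ)⟧}
    (hT : Triangle.mk u v w ∈ distTriang C) {δ : Z ⟶ Z} (hδ : δ ∈ vanishingEnd v w) :
    δ ≫ δ = 0 := by
  obtain ⟨ε, hε⟩ := Triangle.yoneda_exact₃ _ hT δ (mem_vanishingEnd.1 hδ).1
  calc δ ≫ δ = (δ ≫ w) ≫ ε := by nth_rewrite 2 [hε]; exact (Category.assoc _ _ _).symm
    _ = 0 := by rw [(mem_vanishingEnd.1 hδ).2]; exact zero_comp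

lemma mk_comp_hom_inv_comp_distinguished {A B Z : C} {u : A ⟶ B} {v : B ⟶ Z}
    {w : Z ⟶ A⟦(1 : ℤ)⟧} (hT : Triangle.mk u v w ∈ distTriang C) (φ : Z ≅ Z) :
    Triangle.mk u (v ≫ φ.hom) (φ.inv ≫ w) ∈ distTriang C :=
  isomorphic_distinguished _ hT _
    (Triangle.isoMk _ _ (Iso.refl _) (Iso.refl _) φ.symm
      ((Category.comp_id u).trans (Category.id_comp u).symm)
      (show (v ≫ φ.hom) ≫ φ.inv = 𝟙 B ≫ v by simp)
      (show (φ.inv ≫ w) ≫ (𝟙 A)⟦(1 : ℤ)⟧' = φ.inv ≫ w by simp))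

namespace TriangleCompletion

variable {A B : C} {u : A ⟶ B} {Z : C}

lemma nonempty_iff : Nonempty (TriangleCompletion u Z) ↔ ConeIs u Z :=
  ⟨fun ⟨⟨⟨v, w⟩, h⟩⟩ => ⟨v, w, h⟩, fun ⟨v, w, h⟩ => ⟨⟨⟨v, w⟩, h⟩⟩⟩

instance : MulAction (Aut Z) (TriangleCompletion u Z) where
  smul φ c := ⟨(c.1.1 ≫ φ.hom, φ.inv ≫ c.1.2), mk_comp_hom_inv_comp_distinguished c.2 φ⟩
  one_smul _ := Subtype.ext (Prod.ext (Category.comp_id _) (Category.id_comp _))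
  mul_smul _ _ _ := Subtype.ext (Prod.ext (Category.assoc _ _ _).symm (Category.assoc _ _ _))

lemma smul_val (φ : Aut Z) (c : TriangleCompletion u Z) :
    (φ • c).1 = (c.1.1 ≫ φ.hom, φ.inv ≫ c.1.2) :=
  rfl

instance : MulAction.IsPretransitive (Aut Z) (TriangleCompletion u Z) where
  exists_smul_eq c₀ c := by
    obtain ⟨e, he₁, he₂⟩ := exists_iso_of_arrow_iso _ _ c₀.2 c.2 (Iso.refl _)
    refine ⟨Triangle.π₃.mapIso e, Subtype.ext (Prod.ext ?_ ((Iso.inv_comp_eq _).2 ?_))⟩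
    · exact e.hom.comm₂.trans (by rw [he₂]; exact Category.id_comp _)
    · have h₁ : e.hom.hom₁ = 𝟙 A := he₁
      calc c₀.1.2 = c₀.1.2 ≫ (𝟙 A)⟦(1 : ℤ)⟧' := by simp
        _ = _ := by rw [← h₁]; exact e.hom.comm₃

lemma mem_stabilizer_iff {φ : Aut Z} {c : TriangleCompletion u Z} :
    φ ∈ MulAction.stabilizer (Aut Z) c ↔ φ.hom - 𝟙 Z ∈ vanishingEnd c.1.1 c.1.2 := by
  rw [MulAction.mem_stabilizer_iff, Subtype.ext_iff, smul_val, Prod.ext_iff, mem_vanishingEnd]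
  dsimp only
  rw [Iso.inv_comp_eq (α := (φ : Z ≅ Z)), comp_sub, sub_comp, sub_eq_zero, sub_eq_zero,
    Category.comp_id, Category.id_comp, eq_comm (a := c.1.2)]

lemma card_stabilizer (c : TriangleCompletion u Z) :
    Nat.card (MulAction.stabilizer (Aut Z) c) = Nat.card (vanishingEnd c.1.1 c.1.2) :=
  Nat.card_congr
    { toFun φ := ⟨φ.1.hom - 𝟙 Z, mem_stabilizer_iff.1 φ.2⟩
      invFun δ := ⟨unipotentAut δ.1 (sq_eq_zero_of_mem_vanishingEnd c.2 δ.2),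
        mem_stabilizer_iff.2 (by simp [δ.2])⟩
      left_inv φ := Subtype.ext (Iso.ext (by simp))
      right_inv δ := Subtype.ext (by simp) }

end TriangleCompletion

noncomputable def rotateCompletionEquiv (X L Y : C) :
    (Σ u : X ⟶ L, TriangleCompletion u Y) ≃ Σ v : L ⟶ Y, TriangleCompletion v (X⟦(1 : ℤ)⟧) where
  toFun t := ⟨t.2.1.1, ⟨(t.2.1.2, -t.1⟦(1 : ℤ)⟧'), rot_of_distTriang _ t.2.2⟩⟩
  invFun t := ⟨(shiftFunctor C (1 : ℤ)).preimage (-t.2.1.2), ⟨(t.1, t.2.1.1),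
    (rotate_distinguished_triangle _).2 (by
      convert t.2.2 using 1
      exact congrArg (Triangle.mk _ _)
        ((congrArg Neg.neg (Functor.map_preimage _ _)).trans (neg_neg _)))⟩⟩
  left_inv t := Sigma.subtype_ext (by simp) rfl
  right_inv t := Sigma.subtype_ext rfl (by simp)

instance (Z : C) [Finite (Z ⟶ Z)] : Finite (Aut Z) :=
  Finite.of_injective (fun φ : Aut Z => φ.hom) fun _ _ h => Iso.ext h

open scoped Classical in
lemma TriangleCompletion.sum_card_vanishingEnd [∀ A B : C, Fintype (A ⟶ B)] {A B Z : C}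
    {u : A ⟶ B} [Nonempty (TriangleCompletion u Z)] :
    ∑ c : TriangleCompletion u Z, Nat.card (vanishingEnd c.1.1 c.1.2) = Nat.card (Aut Z) := by
  have h : ∀ c : TriangleCompletion u Z,
      Nat.card (vanishingEnd c.1.1 c.1.2) * Nat.card (TriangleCompletion u Z) = Nat.card (Aut Z) :=
    fun c => by rw [← card_stabilizer, ← MulAction.index_stabilizer_of_transitive (Aut Z) c,
      Subgroup.card_mul_index]
  refine Nat.eq_of_mul_eq_mul_right (Nat.card_pos (α := TriangleCompletion u Z)) ?_
  rw [Finset.sum_mul, Finset.sum_congr rfl fun c _ => h c, Finset.sum_const, smul_eq_mul,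
    Finset.card_univ, ← Nat.card_eq_fintype_card, mul_comm]

open scoped Classical in
lemma sum_card_vanishingEnd_sigma [∀ A B : C, Fintype (A ⟶ B)] (A B Z : C) :
    ∑ t : Σ u : A ⟶ B, TriangleCompletion u Z, Nat.card (vanishingEnd t.2.1.1 t.2.1.2) =
      Nat.card {u : A ⟶ B // ConeIs u Z} * Nat.card (Aut Z) := by
  rw [Fintype.sum_sigma]
  trans ∑ u : A ⟶ B, if ConeIs u Z then Nat.card (Aut Z) else 0
  · refine Finset.sum_congr rfl fun u _ => ?_
    split_ifs with h
    · have := TriangleCompletion.nonempty_iff.2 h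
      exact TriangleCompletion.sum_card_vanishingEnd
    · have := not_nonempty_iff.1 (mt TriangleCompletion.nonempty_iff.1 h)
      simp
  · rw [Finset.sum_ite, Finset.sum_const_zero, add_zero, Finset.sum_const, smul_eq_mul,
      Nat.card_eq_fintype_card (α := {u // ConeIs u Z}), Fintype.card_subtype]

open scoped Classical in
lemma sum_card_vanishingEnd_rotate [∀ A B : C, Fintype (A ⟶ B)] (X L Y : C) :
    ∑ t : Σ u : X ⟶ L, TriangleCompletion u Y, Nat.card (vanishingEnd t.2.1.2 (-t.1⟦(1 : ℤ)⟧')) =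
      Nat.card {g : L ⟶ Y // ConeIs g (X⟦(1 : ℤ)⟧)} * Nat.card (Aut X) := by
  rw [← card_aut_shift X 1, ← sum_card_vanishingEnd_sigma L Y]
  exact (rotateCompletionEquiv X L Y).sum_comp fun t => Nat.card (vanishingEnd t.2.1.1 t.2.1.2)

end Pretriangulated

theorem toen_formula {C : Type u} [Category.{v} C] [Preadditive C]
    [HasZeroObject C] [HasShift C ℤ] [∀ i : ℤ, (CategoryTheory.shiftFunctor C i).Additive]
    [Pretriangulated C] [∀ A B : C, Finite (A ⟶ B)] (hC : LeftLocallyHomologicallyFinite C)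
    (X Y L : C) :
    (Nat.card {g : L ⟶ Y // ConeIs g (X⟦(1 : ℤ)⟧)} : ℚ) * homAlternatingProd L Y /
        (Nat.card (Aut Y) * homAlternatingProd Y Y) =
      (Nat.card {f : X ⟶ L // ConeIs f Y} : ℚ) * homAlternatingProd X L /
        (Nat.card (Aut X) * homAlternatingProd X X) := by
  classical
  let _ : ∀ A B : C, Fintype (A ⟶ B) := fun A B => Fintype.ofFinite _
  have hsum : ∑ t : Σ u : X ⟶ L, TriangleCompletion u Y,
      (Nat.card (vanishingEnd t.2.1.1 t.2.1.2) : ℚ) *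
        (homAlternatingProd Y Y * homAlternatingProd X L) =
      ∑ t : Σ u : X ⟶ L, TriangleCompletion u Y,
        (Nat.card (vanishingEnd t.2.1.2 (-t.1⟦(1 : ℤ)⟧')) : ℚ) *
          (homAlternatingProd X X * homAlternatingProd L Y) :=
    Finset.sum_congr rfl fun t _ => card_vanishingEnd_mul_homAlternatingProd hC t.2.2
  rw [← Finset.sum_mul, ← Finset.sum_mul] at hsum
  simp only [← Nat.cast_sum, sum_card_vanishingEnd_sigma, sum_card_vanishingEnd_rotate,
    Nat.cast_mul] at hsum
  have := hC.homAlternatingProd_pos X X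
  have := hC.homAlternatingProd_pos Y Y
  have : (0 : ℚ) < Nat.card (Aut X) := Nat.cast_pos.2 Nat.card_pos
  have : (0 : ℚ) < Nat.card (Aut Y) := Nat.cast_pos.2 Nat.card_pos
  rw [div_eq_div_iff (by positivity) (by positivity)]
  linear_combination -hsum

/-- Toën's formula. -/
theorem stmt7 {k : Type*} [Field k] [Finite k]
    {C : Type u} [CategoryTheory.Category.{v} C] [Preadditive C] [CategoryTheory.Linear k C]
    [HasZeroObject C] [HasBinaryBiproducts C] [HasShift C ℤ]
    [∀ i : ℤ, (CategoryTheory.shiftFunctor C i).Additive] [Pretriangulated C]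
    [∀ X Y : C, FiniteDimensional k (X ⟶ Y)]
    (hloc : ∀ X : C, Indecomposable X → IsLocalRing (CategoryTheory.End X))
    (hhfin : ∀ X Y : C, ∃ N : ℕ, ∀ i ≥ N, ∀ f : X⟦(i : ℤ)⟧ ⟶ Y, f = 0)
    (X Y L : C) :
    (Nat.card {g : L ⟶ Y // ConeIs g (X⟦(1 : ℤ)⟧)} : ℚ) * homAlternatingProd L Y /
        (Nat.card (Aut Y) * homAlternatingProd Y Y) =
      (Nat.card {f : X ⟶ L // ConeIs f Y} : ℚ) * homAlternatingProd X L /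
        (Nat.card (Aut X) * homAlternatingProd X X) :=
  have : ∀ A B : C, Finite (A ⟶ B) := fun _ _ => Module.finite_of_finite k
  toen_formula hhfin X Y L
end

section
/- Assume in addition that C is triangulated (the octahedral axiom holds). Let X, Y, Z, M, L, L' be objects of C and let L' --(f',-m')--> M ⊕ X --(m;f)--> L --theta--> L'[1] be a distinguished triangle, where f' : L' -> M, m' : L' -> X, m : M -> L, f : X -> L. Then the following two conditions are equivalent: (a) Cone(m) is isomorphic to Z[1] and Cone(f) is isomorphic to Y; (b) Cone(m') is isomorphic to Z[1] and Cone(f') is isomorphic to Y. -/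
/-!
Each of the four implications is one application of the octahedral axiom to a factorisation
through the biproduct `M ⊞ X`: `m = inl ≫ (m;f)` and `f = inr ≫ (m;f)` for (a) ⇒ (b), and
`-m' = (f',-m') ≫ snd` and `f' = (f',-m') ≫ fst` for (b) ⇒ (a). In each case one of the two
factors sits in a split triangle, and the third triangle of the octahedron is, up to rotation,
a triangle on the morphism we want.
-/

open CategoryTheory CategoryTheory.Limits CategoryTheory.Pretriangulated

universe v u

section

variable {C : Type u} [Category.{v} C] [Preadditive C] [HasZeroObject C] [HasShift C ℤ]
  [∀ i : ℤ, (shiftFunctor C i).Additive] [Pretriangulated C]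

lemma ConeIs.of_rotate_distinguished {A B W : C} {u : A ⟶ B} {v : B ⟶ W}
    {w : W ⟶ A⟦(1 : ℤ)⟧} (h : Triangle.mk v w (-u⟦(1 : ℤ)⟧') ∈ distTriang C) :
    ConeIs u W :=
  ⟨v, w, (rotate_distinguished_triangle _).2 h⟩

lemma ConeIs.neg {A B W : C} {u : A ⟶ B} (h : ConeIs u W) : ConeIs (-u) W := by
  obtain ⟨v, w, hT⟩ := h
  refine ⟨v, -w, isomorphic_distinguished _ hT _ ?_⟩
  exact Triangle.isoMk _ _ (-Iso.refl A) (Iso.refl B) (Iso.refl W)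
    (by simp [Triangle.mk]) (by simp [Triangle.mk]) (by simp [Triangle.mk])

lemma ConeIs.neg_iff {A B W : C} {u : A ⟶ B} : ConeIs (-u) W ↔ ConeIs u W :=
  ⟨fun h => neg_neg u ▸ h.neg, ConeIs.neg⟩

lemma biprod_inl_snd_distinguished (X₁ X₂ : C) :
    Triangle.mk (biprod.inl : X₁ ⟶ X₁ ⊞ X₂) biprod.snd 0 ∈ distTriang C :=
  binaryBiproductTriangle_distinguished X₁ X₂

lemma biprod_inr_fst_distinguished (X₁ X₂ : C) :
    Triangle.mk (biprod.inr : X₂ ⟶ X₁ ⊞ X₂) biprod.fst 0 ∈ distTriang C :=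
  isomorphic_distinguished _ (binaryBiproductTriangle_distinguished X₂ X₁) _
    (Triangle.isoMk _ _ (Iso.refl _) (biprod.braiding X₁ X₂) (Iso.refl _)
      (by apply biprod.hom_ext <;> simp [Triangle.mk, binaryBiproductTriangle])
      (by simp [Triangle.mk, binaryBiproductTriangle])
      (by simp [Triangle.mk, binaryBiproductTriangle]))

lemma biprod_snd_distinguished (X₁ X₂ : C) :
    Triangle.mk (biprod.snd : X₁ ⊞ X₂ ⟶ X₂) 0 (-biprod.inl⟦(1 : ℤ)⟧') ∈ distTriang C :=
  rot_of_distTriang _ (biprod_inl_snd_distinguished X₁ X₂)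

lemma biprod_fst_distinguished (X₁ X₂ : C) :
    Triangle.mk (biprod.fst : X₁ ⊞ X₂ ⟶ X₁) 0 (-biprod.inr⟦(1 : ℤ)⟧') ∈ distTriang C :=
  rot_of_distTriang _ (biprod_inr_fst_distinguished X₁ X₂)

variable [IsTriangulated C]

/-- The third triangle `Z₁₂ → W → A⟦1⟧ → Z₁₂⟦1⟧` of the octahedron is the rotation of a
triangle on `g`. -/
lemma ConeIs.of_octahedron {X₁ X₂ X₃ Z₁₂ A W : C} {u₁₂ : X₁ ⟶ X₂} {u₂₃ : X₂ ⟶ X₃}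
    {u₁₃ : X₁ ⟶ X₃} {v₁₂ : X₂ ⟶ Z₁₂} {w₁₂ : Z₁₂ ⟶ X₁⟦(1 : ℤ)⟧} {v₂₃ : X₃ ⟶ A⟦(1 : ℤ)⟧}
    {w₂₃ : A⟦(1 : ℤ)⟧ ⟶ X₂⟦(1 : ℤ)⟧} (comm : u₁₂ ≫ u₂₃ = u₁₃)
    (h₁₂ : Triangle.mk u₁₂ v₁₂ w₁₂ ∈ distTriang C)
    (h₂₃ : Triangle.mk u₂₃ v₂₃ w₂₃ ∈ distTriang C) (h₁₃ : ConeIs u₁₃ W)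
    {g : A ⟶ Z₁₂} (hg : w₂₃ ≫ v₁₂⟦(1 : ℤ)⟧' = -g⟦(1 : ℤ)⟧') : ConeIs g W := by
  obtain ⟨v₁₃, w₁₃, h₁₃⟩ := h₁₃
  have O := Triangulated.someOctahedron comm h₁₂ h₂₃ h₁₃
  exact ConeIs.of_rotate_distinguished (hg ▸ O.mem)

end

/-- for a distinguished triangle
`L' --(f',-m')--> M ⊞ X --(m;f)--> L --θ--> L'[1]` in a triangulated category,
the cone conditions on `(m, f)` and on `(m', f')` are equivalent. -/
theorem stmt8 {k : Type*} [Field k] [Finite k]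
    {C : Type u} [CategoryTheory.Category.{v} C] [Preadditive C] [CategoryTheory.Linear k C]
    [HasZeroObject C] [HasBinaryBiproducts C] [HasShift C ℤ]
    [∀ i : ℤ, (CategoryTheory.shiftFunctor C i).Additive] [Pretriangulated C]
    [IsTriangulated C]
    [∀ X Y : C, FiniteDimensional k (X ⟶ Y)]
    (hloc : ∀ X : C, Indecomposable X → IsLocalRing (CategoryTheory.End X))
    {X Y Z M L L' : C}
    (f' : L' ⟶ M) (m' : L' ⟶ X) (m : M ⟶ L) (f : X ⟶ L) (θ : L ⟶ L'⟦(1 : ℤ)⟧)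
    (hT : Triangle.mk (biprod.lift f' (-m')) (biprod.desc m f) θ ∈ distTriang C) :
    (ConeIs m (Z⟦(1 : ℤ)⟧) ∧ ConeIs f Y) ↔ (ConeIs m' (Z⟦(1 : ℤ)⟧) ∧ ConeIs f' Y) := by
  have hrot : Triangle.mk (biprod.desc m f) θ (-(biprod.lift f' (-m'))⟦(1 : ℤ)⟧') ∈
      distTriang C := rot_of_distTriang _ hT
  constructor
  · rintro ⟨hm, hf⟩
    refine ⟨ConeIs.neg_iff.1 ?_, ?_⟩
    · exact .of_octahedron (biprod.inl_desc m f) (biprod_inl_snd_distinguished M X) hrot hm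
        (by simp [← Functor.map_comp])
    · exact .of_octahedron (biprod.inr_desc m f) (biprod_inr_fst_distinguished M X) hrot hf
        (by simp [← Functor.map_comp])
  · rintro ⟨hm', hf'⟩
    refine ⟨?_, ?_⟩
    · exact .of_octahedron (biprod.lift_snd f' (-m')) hT (biprod_snd_distinguished M X) hm'.neg
        (by simp [← Functor.map_comp])
    · exact .of_octahedron (biprod.lift_fst f' (-m')) hT (biprod_fst_distinguished M X) hf'
        (by simp [← Functor.map_comp])
end
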